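/- Let C be a k-coalgebra, σ : C ⊗ C → k a strong D-map, and (M, ρ) a right C-comodule. Then the map R_σ : M ⊗ M → M ⊗ M defined by R_σ(m ⊗ n) = ∑ σ(m₍₁₎ ⊗ n₍₁₎) m₍₀₎ ⊗ n₍₀₎ is a solution of the Long equation. -/

import Mathlib

open TensorProduct

noncomputable section

variable {k M : Type*} [Field k] [AddCommGroup M] [Module k M]

/-- The flip map τ : M ⊗ M → M ⊗ M, τ(m ⊗ n) = n ⊗ m. -/
def tau (k M : Type*) [Field k] [AddCommGroup M] [Module k M] :
    M ⊗[k] M →ₗ[k] M ⊗[k] M := (TensorProduct.comm k M M).toLinearMap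

/-- R¹² = R ⊗ id on M ⊗ (M ⊗ M) (transported along the associator). -/
def R12 (R : M ⊗[k] M →ₗ[k] M ⊗[k] M) :
    M ⊗[k] (M ⊗[k] M) →ₗ[k] M ⊗[k] (M ⊗[k] M) :=
  (TensorProduct.assoc k M M M).toLinearMap ∘ₗ
    TensorProduct.map R LinearMap.id ∘ₗ (TensorProduct.assoc k M M M).symm.toLinearMap

/-- R²³ = id ⊗ R on M ⊗ (M ⊗ M). -/
def R23 (R : M ⊗[k] M →ₗ[k] M ⊗[k] M) :
    M ⊗[k] (M ⊗[k] M) →ₗ[k] M ⊗[k] (M ⊗[k] M) :=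
  TensorProduct.map LinearMap.id R

/-- R¹³ = (id ⊗ τ)(R ⊗ id)(id ⊗ τ) on M ⊗ (M ⊗ M). -/
def R13 (R : M ⊗[k] M →ₗ[k] M ⊗[k] M) :
    M ⊗[k] (M ⊗[k] M) →ₗ[k] M ⊗[k] (M ⊗[k] M) :=
  TensorProduct.map LinearMap.id (tau k M) ∘ₗ R12 R ∘ₗ
    TensorProduct.map LinearMap.id (tau k M)

/-- R is a solution of the Long equation: R¹²R¹³ = R¹³R¹² and R¹²R²³ = R²³R¹². -/
def IsLongSolution (R : M ⊗[k] M →ₗ[k] M ⊗[k] M) : Prop :=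
  R12 R ∘ₗ R13 R = R13 R ∘ₗ R12 R ∧ R12 R ∘ₗ R23 R = R23 R ∘ₗ R12 R

end

noncomputable section

open Coalgebra

variable {k : Type*} [Field k] {C : Type*} [AddCommGroup C] [Module k C] [Coalgebra k C]

/-- The map C ⊗ C → C, c ⊗ d ↦ ∑ σ(c₍₁₎ ⊗ d) c₍₂₎. -/
def sweedL (k : Type*) [Field k] (C : Type*) [AddCommGroup C] [Module k C] [Coalgebra k C]
    (σ : C ⊗[k] C →ₗ[k] k) : C ⊗[k] C →ₗ[k] C :=
  (TensorProduct.rid k C).toLinearMap ∘ₗ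
    TensorProduct.map LinearMap.id σ ∘ₗ
    (TensorProduct.assoc k C C C).toLinearMap ∘ₗ
    TensorProduct.map ((TensorProduct.comm k C C).toLinearMap ∘ₗ comul) LinearMap.id

/-- The map C ⊗ C → C, c ⊗ d ↦ ∑ σ(c₍₂₎ ⊗ d) c₍₁₎. -/
def sweedR (k : Type*) [Field k] (C : Type*) [AddCommGroup C] [Module k C] [Coalgebra k C]
    (σ : C ⊗[k] C →ₗ[k] k) : C ⊗[k] C →ₗ[k] C :=
  (TensorProduct.rid k C).toLinearMap ∘ₗ
    TensorProduct.map LinearMap.id σ ∘ₗ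
    (TensorProduct.assoc k C C C).toLinearMap ∘ₗ
    TensorProduct.map comul LinearMap.id

/-- σ is a strong D-map: ∑ σ(c₍₁₎ ⊗ d) c₍₂₎ = ∑ σ(c₍₂₎ ⊗ d) c₍₁₎ for all c, d. -/
def IsStrongDMap (σ : C ⊗[k] C →ₗ[k] k) : Prop :=
  sweedL k C σ = sweedR k C σ

variable {M : Type*} [AddCommGroup M] [Module k M]

/-- Coassociativity of a right comodule structure map ρ : M → M ⊗ C. -/
def IsCoassoc (ρ : M →ₗ[k] M ⊗[k] C) : Prop :=
  TensorProduct.map LinearMap.id comul ∘ₗ ρ =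
    (TensorProduct.assoc k M C C).toLinearMap ∘ₗ TensorProduct.map ρ LinearMap.id ∘ₗ ρ

/-- Counitality of a right comodule structure map ρ : M → M ⊗ C. -/
def IsCounital (ρ : M →ₗ[k] M ⊗[k] C) : Prop :=
  (TensorProduct.rid k M).toLinearMap ∘ₗ TensorProduct.map LinearMap.id counit ∘ₗ ρ =
    LinearMap.id

/-- R_σ : M ⊗ M → M ⊗ M, m ⊗ n ↦ ∑ σ(m₍₁₎ ⊗ n₍₁₎) m₍₀₎ ⊗ n₍₀₎. -/
def Rsigma (ρ : M →ₗ[k] M ⊗[k] C) (σ : C ⊗[k] C →ₗ[k] k) :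
    M ⊗[k] M →ₗ[k] M ⊗[k] M :=
  (TensorProduct.rid k (M ⊗[k] M)).toLinearMap ∘ₗ
    TensorProduct.map LinearMap.id σ ∘ₗ
    (TensorProduct.tensorTensorTensorComm k M C M C).toLinearMap ∘ₗ
    TensorProduct.map ρ ρ

end


/-!
A right `C`-comodule `(M, ρ)` is a left module over the convolution algebra `C*`, with
`φ ⇀ m = ∑ φ(m₍₁₎) m₍₀₎`, and `M ⊗ M ⊗ M` is a comodule over the coalgebra `C ⊗ C ⊗ C`.
Using the counit, `R¹²`, `R¹³` and `R²³` are the actions of the functionals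
`σ₁₂ = σ ⊗ ε`, `σ₁₃` and `σ₂₃ = ε ⊗ σ` on `C ⊗ C ⊗ C`, so the Long equation says that `σ₁₂`
commutes with `σ₁₃` and with `σ₂₃` in the convolution algebra `(C ⊗ C ⊗ C)*`. Evaluated at
`a ⊗ b ⊗ c`, these commutators are `σ(a₍₁₎ ⊗ b) σ(a₍₂₎ ⊗ c) - σ(a₍₂₎ ⊗ b) σ(a₍₁₎ ⊗ c)` and
`σ(a ⊗ b₍₁₎) σ(b₍₂₎ ⊗ c) - σ(a ⊗ b₍₂₎) σ(b₍₁₎ ⊗ c)`, which vanish because `σ` is a strong D-map.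
-/

open Coalgebra WithConv

section Comodule

variable {R : Type*} [CommSemiring R] {C D E : Type*} [AddCommMonoid C] [Module R C]
  [AddCommMonoid D] [Module R D] [AddCommMonoid E] [Module R E]
  {M N P : Type*} [AddCommMonoid M] [Module R M] [AddCommMonoid N] [Module R N]
  [AddCommMonoid P] [Module R P]

noncomputable def dualAct (ρ : M →ₗ[R] M ⊗[R] C) (φ : WithConv (C →ₗ[R] R)) : M →ₗ[R] M :=
  (TensorProduct.rid R M).toLinearMap ∘ₗ φ.ofConv.lTensor M ∘ₗ ρ

lemma dualAct_comp_eq_comp_dualAct {ρ : M →ₗ[R] M ⊗[R] C} {ρ' : N →ₗ[R] N ⊗[R] D}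
    {f : M →ₗ[R] N} {g : C →ₗ[R] D} (hfg : ρ' ∘ₗ f = map f g ∘ₗ ρ) (φ : WithConv (D →ₗ[R] R)) :
    dualAct ρ' φ ∘ₗ f = f ∘ₗ dualAct ρ (toConv (φ.ofConv ∘ₗ g)) := by
  have natural : (TensorProduct.rid R N).toLinearMap ∘ₗ φ.ofConv.lTensor N ∘ₗ map f g =
      f ∘ₗ (TensorProduct.rid R M).toLinearMap ∘ₗ (φ.ofConv ∘ₗ g).lTensor M := by
    ext; simp
  simp only [dualAct, LinearMap.comp_assoc, hfg]
  simp only [← LinearMap.comp_assoc] at natural ⊢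
  rw [natural]

noncomputable def tensorCoaction (ρ : M →ₗ[R] M ⊗[R] C) (ρ' : N →ₗ[R] N ⊗[R] D) :
    M ⊗[R] N →ₗ[R] (M ⊗[R] N) ⊗[R] (C ⊗[R] D) :=
  (tensorTensorTensorComm R M C N D).toLinearMap ∘ₗ map ρ ρ'

lemma dualAct_tensorCoaction (ρ : M →ₗ[R] M ⊗[R] C) (ρ' : N →ₗ[R] N ⊗[R] D)
    (φ : WithConv (C →ₗ[R] R)) (ψ : WithConv (D →ₗ[R] R)) :
    dualAct (tensorCoaction ρ ρ') (toConv (LinearMap.mul' R R ∘ₗ map φ.ofConv ψ.ofConv)) =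
      map (dualAct ρ φ) (dualAct ρ' ψ) := by
  rw [dualAct, dualAct, dualAct, map_comp, map_comp, tensorCoaction]
  simp only [← LinearMap.comp_assoc]
  congr 1
  ext; simp [← smul_tmul', smul_smul, mul_comm]

lemma tensorCoaction_comp_assoc_symm (ρ₁ : M →ₗ[R] M ⊗[R] C) (ρ₂ : N →ₗ[R] N ⊗[R] D)
    (ρ₃ : P →ₗ[R] P ⊗[R] E) :
    tensorCoaction (tensorCoaction ρ₁ ρ₂) ρ₃ ∘ₗ (TensorProduct.assoc R M N P).symm.toLinearMap =
      map (TensorProduct.assoc R M N P).symm.toLinearMap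
          (TensorProduct.assoc R C D E).symm.toLinearMap ∘ₗ
        tensorCoaction ρ₁ (tensorCoaction ρ₂ ρ₃) := by
  simp only [tensorCoaction, LinearMap.comp_assoc, ← LinearMap.rTensor_comp_map,
    ← LinearMap.lTensor_comp_map, map_map_comp_assoc_symm_eq]
  simp only [← LinearMap.comp_assoc]
  congr 1
  ext; rfl

lemma tensorCoaction_comp_lTensor_comm (ρ₁ : M →ₗ[R] M ⊗[R] C) (ρ₂ : N →ₗ[R] N ⊗[R] D)
    (ρ₃ : P →ₗ[R] P ⊗[R] E) :
    tensorCoaction ρ₁ (tensorCoaction ρ₃ ρ₂) ∘ₗ (TensorProduct.comm R N P).toLinearMap.lTensor M =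
      map ((TensorProduct.comm R N P).toLinearMap.lTensor M)
          ((TensorProduct.comm R D E).toLinearMap.lTensor C) ∘ₗ
        tensorCoaction ρ₁ (tensorCoaction ρ₂ ρ₃) := by
  simp only [tensorCoaction, LinearMap.comp_assoc, ← LinearMap.lTensor_comp_map]
  rw [LinearMap.map_comp_lTensor, map_comp_comm_eq, ← LinearMap.lTensor_comp_map]
  simp only [← LinearMap.comp_assoc]
  congr 1
  ext; rfl

lemma rTensor_tensorCoaction_comp_tensorCoaction (ρ : M →ₗ[R] M ⊗[R] C)
    (ρ' : N →ₗ[R] N ⊗[R] D) :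
    (tensorCoaction ρ ρ').rTensor (C ⊗[R] D) ∘ₗ tensorCoaction ρ ρ' =
      (tensorTensorTensorComm R M C N D).toLinearMap.rTensor (C ⊗[R] D) ∘ₗ
        (tensorTensorTensorComm R (M ⊗[R] C) C (N ⊗[R] D) D).toLinearMap ∘ₗ
        map (ρ.rTensor C ∘ₗ ρ) (ρ'.rTensor D ∘ₗ ρ') := by
  have natural : (tensorCoaction ρ ρ').rTensor (C ⊗[R] D) ∘ₗ
      (tensorTensorTensorComm R M C N D).toLinearMap =
        (tensorTensorTensorComm R M C N D).toLinearMap.rTensor (C ⊗[R] D) ∘ₗ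
          (tensorTensorTensorComm R (M ⊗[R] C) C (N ⊗[R] D) D).toLinearMap ∘ₗ
          map (ρ.rTensor C) (ρ'.rTensor D) := by
    ext; rfl
  rw [tensorCoaction, ← LinearMap.comp_assoc (map ρ ρ'), ← tensorCoaction, natural, map_comp]
  simp only [LinearMap.comp_assoc]

variable [Coalgebra R C] [Coalgebra R D]

lemma lTensor_comul_comp_tensorCoaction (ρ : M →ₗ[R] M ⊗[R] C) (ρ' : N →ₗ[R] N ⊗[R] D) :
    comul.lTensor (M ⊗[R] N) ∘ₗ tensorCoaction ρ ρ' =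
      (tensorTensorTensorComm R C C D D).toLinearMap.lTensor (M ⊗[R] N) ∘ₗ
        (tensorTensorTensorComm R M (C ⊗[R] C) N (D ⊗[R] D)).toLinearMap ∘ₗ
        map (comul.lTensor M ∘ₗ ρ) (comul.lTensor N ∘ₗ ρ') := by
  have natural : (tensorTensorTensorComm R M (C ⊗[R] C) N (D ⊗[R] D)).toLinearMap ∘ₗ
      map (comul.lTensor M) (comul.lTensor N) =
        (map comul comul).lTensor (M ⊗[R] N) ∘ₗ (tensorTensorTensorComm R M C N D).toLinearMap := by
    ext; simp
  rw [map_comp, ← LinearMap.comp_assoc (map ρ ρ'), natural]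
  simp only [← LinearMap.comp_assoc, ← LinearMap.lTensor_comp]
  rfl

end Comodule

section CoassocComodule

variable {k : Type*} [Field k] {C : Type*} [AddCommGroup C] [Module k C] [Coalgebra k C]
  {M : Type*} [AddCommGroup M] [Module k M]

lemma rTensor_comp_eq_of_isCoassoc {ρ : M →ₗ[k] M ⊗[k] C} (hρ : IsCoassoc ρ) :
    ρ.rTensor C ∘ₗ ρ =
      (TensorProduct.assoc k M C C).symm.toLinearMap ∘ₗ comul.lTensor M ∘ₗ ρ := by
  rw [LinearMap.lTensor, hρ, ← LinearMap.comp_assoc, LinearEquiv.symm_comp, LinearMap.id_comp]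
  rfl

lemma dualAct_comp_dualAct {ρ : M →ₗ[k] M ⊗[k] C} (hρ : IsCoassoc ρ)
    (φ ψ : WithConv (C →ₗ[k] k)) :
    dualAct ρ φ ∘ₗ dualAct ρ ψ = dualAct ρ (φ * ψ) := by
  calc dualAct ρ φ ∘ₗ dualAct ρ ψ
      = ((TensorProduct.rid k M).toLinearMap ∘ₗ
          map ((TensorProduct.rid k M).toLinearMap ∘ₗ φ.ofConv.lTensor M) ψ.ofConv) ∘ₗ
          ρ.rTensor C ∘ₗ ρ := by
        ext m
        simp only [dualAct, LinearMap.comp_apply]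
        induction ρ m using TensorProduct.induction_on with
        | zero => simp
        | add x y hx hy => simp_all
        | tmul m c => simp
    _ = ((TensorProduct.rid k M).toLinearMap ∘ₗ
          (LinearMap.mul' k k ∘ₗ map φ.ofConv ψ.ofConv).lTensor M) ∘ₗ comul.lTensor M ∘ₗ ρ := by
        rw [rTensor_comp_eq_of_isCoassoc hρ, ← LinearMap.comp_assoc]
        congr 1
        ext m a b
        simp [smul_smul, mul_comm]
    _ = dualAct ρ (φ * ψ) := by
        simp only [dualAct, LinearMap.convMul_def, WithConv.ofConv_toConv, LinearMap.lTensor_comp,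
          LinearMap.comp_assoc]

variable {D : Type*} [AddCommGroup D] [Module k D] [Coalgebra k D]
  {N : Type*} [AddCommGroup N] [Module k N]

lemma isCoassoc_tensorCoaction {ρ : M →ₗ[k] M ⊗[k] C} {ρ' : N →ₗ[k] N ⊗[k] D}
    (hρ : IsCoassoc ρ) (hρ' : IsCoassoc ρ') : IsCoassoc (tensorCoaction ρ ρ') := by
  have coherence :
      (TensorProduct.assoc k (M ⊗[k] N) (C ⊗[k] D) (C ⊗[k] D)).toLinearMap ∘ₗ
          (tensorTensorTensorComm k M C N D).toLinearMap.rTensor (C ⊗[k] D) ∘ₗ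
          (tensorTensorTensorComm k (M ⊗[k] C) C (N ⊗[k] D) D).toLinearMap ∘ₗ
          map (TensorProduct.assoc k M C C).symm.toLinearMap
            (TensorProduct.assoc k N D D).symm.toLinearMap =
        (tensorTensorTensorComm k C C D D).toLinearMap.lTensor (M ⊗[k] N) ∘ₗ
          (tensorTensorTensorComm k M (C ⊗[k] C) N (D ⊗[k] D)).toLinearMap := by
    ext; rfl
  change comul.lTensor _ ∘ₗ tensorCoaction ρ ρ' =
    (TensorProduct.assoc k _ _ _).toLinearMap ∘ₗ (tensorCoaction ρ ρ').rTensor _ ∘ₗ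
      tensorCoaction ρ ρ'
  rw [rTensor_tensorCoaction_comp_tensorCoaction, rTensor_comp_eq_of_isCoassoc hρ,
    rTensor_comp_eq_of_isCoassoc hρ', map_comp, lTensor_comul_comp_tensorCoaction]
  simp only [← LinearMap.comp_assoc] at coherence ⊢
  rw [coherence]

end CoassocComodule

section Sigma

variable {k : Type*} [Field k] {C : Type*} [AddCommGroup C] [Module k C] [Coalgebra k C]

noncomputable def sigma12 (σ : C ⊗[k] C →ₗ[k] k) : WithConv (C ⊗[k] (C ⊗[k] C) →ₗ[k] k) :=
  toConv (LinearMap.mul' k k ∘ₗ map σ counit ∘ₗ (TensorProduct.assoc k C C C).symm.toLinearMap)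

noncomputable def sigma13 (σ : C ⊗[k] C →ₗ[k] k) : WithConv (C ⊗[k] (C ⊗[k] C) →ₗ[k] k) :=
  toConv ((sigma12 σ).ofConv ∘ₗ (TensorProduct.comm k C C).toLinearMap.lTensor C)

noncomputable def sigma23 (σ : C ⊗[k] C →ₗ[k] k) : WithConv (C ⊗[k] (C ⊗[k] C) →ₗ[k] k) :=
  toConv (LinearMap.mul' k k ∘ₗ map counit σ)

lemma rid_lTensor_counit_comul (c : C) :
    TensorProduct.rid k C ((counit (R := k)).lTensor C (comul c)) = c := by simp

lemma lid_rTensor_counit_comul (c : C) :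
    TensorProduct.lid k C ((counit (R := k)).rTensor C (comul c)) = c := by simp

variable (σ : C ⊗[k] C →ₗ[k] k) (a b c : C)

lemma sigma12_mul_sigma13_tmul :
    (sigma12 σ * sigma13 σ) (a ⊗ₜ (b ⊗ₜ c)) = σ (sweedL k C σ (a ⊗ₜ b) ⊗ₜ c) := by
  rw [LinearMap.convMul_apply, comul_tmul, comul_tmul]
  -- express `b` and `c` through their coproducts, so that both sides are additive in each of
  -- `Δ a`, `Δ b`, `Δ c`
  conv_rhs => rw [← rid_lTensor_counit_comul (k := k) b, ← lid_rTensor_counit_comul (k := k) c]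
  simp only [sweedL, LinearMap.comp_apply, map_tmul]
  generalize comul (R := k) a = x, comul (R := k) b = y, comul (R := k) c = z
  induction x using TensorProduct.induction_on with
  | tmul a₁ a₂ =>
    induction y using TensorProduct.induction_on with
    | tmul b₁ b₂ =>
      induction z using TensorProduct.induction_on with
      | tmul c₁ c₂ => simp [sigma12, sigma13, ← smul_tmul']; ring
      | _ => simp_all [tmul_add]
    | _ => simp_all [tmul_add, add_tmul]
  | _ => simp_all [add_tmul]

lemma sigma13_mul_sigma12_tmul :
    (sigma13 σ * sigma12 σ) (a ⊗ₜ (b ⊗ₜ c)) = σ (sweedR k C σ (a ⊗ₜ b) ⊗ₜ c) := by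
  rw [LinearMap.convMul_apply, comul_tmul, comul_tmul]
  conv_rhs => rw [← lid_rTensor_counit_comul (k := k) b, ← rid_lTensor_counit_comul (k := k) c]
  simp only [sweedR, LinearMap.comp_apply, map_tmul]
  generalize comul (R := k) a = x, comul (R := k) b = y, comul (R := k) c = z
  induction x using TensorProduct.induction_on with
  | tmul a₁ a₂ =>
    induction y using TensorProduct.induction_on with
    | tmul b₁ b₂ =>
      induction z using TensorProduct.induction_on with
      | tmul c₁ c₂ => simp [sigma12, sigma13, ← smul_tmul']; ring
      | _ => simp_all [tmul_add]
    | _ => simp_all [tmul_add, add_tmul]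
  | _ => simp_all [add_tmul]

lemma sigma12_mul_sigma23_tmul :
    (sigma12 σ * sigma23 σ) (a ⊗ₜ (b ⊗ₜ c)) = σ (a ⊗ₜ sweedR k C σ (b ⊗ₜ c)) := by
  rw [LinearMap.convMul_apply, comul_tmul, comul_tmul]
  conv_rhs => rw [← rid_lTensor_counit_comul (k := k) a, ← lid_rTensor_counit_comul (k := k) c]
  simp only [sweedR, LinearMap.comp_apply, map_tmul]
  generalize comul (R := k) a = x, comul (R := k) b = y, comul (R := k) c = z
  induction x using TensorProduct.induction_on with
  | tmul a₁ a₂ =>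
    induction y using TensorProduct.induction_on with
    | tmul b₁ b₂ =>
      induction z using TensorProduct.induction_on with
      | tmul c₁ c₂ => simp [sigma12, sigma23, ← smul_tmul']; ring
      | _ => simp_all [tmul_add]
    | _ => simp_all [tmul_add, add_tmul]
  | _ => simp_all [add_tmul]

lemma sigma23_mul_sigma12_tmul :
    (sigma23 σ * sigma12 σ) (a ⊗ₜ (b ⊗ₜ c)) = σ (a ⊗ₜ sweedL k C σ (b ⊗ₜ c)) := by
  rw [LinearMap.convMul_apply, comul_tmul, comul_tmul]
  conv_rhs => rw [← lid_rTensor_counit_comul (k := k) a, ← rid_lTensor_counit_comul (k := k) c]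
  simp only [sweedL, LinearMap.comp_apply, map_tmul]
  generalize comul (R := k) a = x, comul (R := k) b = y, comul (R := k) c = z
  induction x using TensorProduct.induction_on with
  | tmul a₁ a₂ =>
    induction y using TensorProduct.induction_on with
    | tmul b₁ b₂ =>
      induction z using TensorProduct.induction_on with
      | tmul c₁ c₂ => simp [sigma12, sigma23, ← smul_tmul']; ring
      | _ => simp_all [tmul_add]
    | _ => simp_all [tmul_add, add_tmul]
  | _ => simp_all [add_tmul]

variable {σ}

theorem IsStrongDMap.commute_sigma12_sigma13 (hσ : IsStrongDMap σ) :
    Commute (sigma12 σ) (sigma13 σ) :=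
  WithConv.ext <| TensorProduct.ext_threefold' fun a b c => by
    rw [sigma12_mul_sigma13_tmul, sigma13_mul_sigma12_tmul, hσ]

theorem IsStrongDMap.commute_sigma12_sigma23 (hσ : IsStrongDMap σ) :
    Commute (sigma12 σ) (sigma23 σ) :=
  WithConv.ext <| TensorProduct.ext_threefold' fun a b c => by
    rw [sigma12_mul_sigma23_tmul, sigma23_mul_sigma12_tmul, hσ]

end Sigma

section Rsigma

variable {k : Type*} [Field k] {C : Type*} [AddCommGroup C] [Module k C]
  {M : Type*} [AddCommGroup M] [Module k M] {ρ : M →ₗ[k] M ⊗[k] C} (σ : C ⊗[k] C →ₗ[k] k)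

lemma Rsigma_eq_dualAct : Rsigma ρ σ = dualAct (tensorCoaction ρ ρ) (toConv σ) := rfl

variable [Coalgebra k C]

lemma R23_Rsigma (hρ : IsCounital ρ) :
    R23 (Rsigma ρ σ) = dualAct (tensorCoaction ρ (tensorCoaction ρ ρ)) (sigma23 σ) := by
  rw [sigma23, dualAct_tensorCoaction ρ _ (toConv counit) (toConv σ), ← Rsigma_eq_dualAct,
    show dualAct ρ (toConv counit) = LinearMap.id from hρ]
  rfl

lemma R12_Rsigma (hρ : IsCounital ρ) :
    R12 (Rsigma ρ σ) = dualAct (tensorCoaction ρ (tensorCoaction ρ ρ)) (sigma12 σ) := by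
  have h := dualAct_comp_eq_comp_dualAct (tensorCoaction_comp_assoc_symm ρ ρ ρ)
    (toConv (LinearMap.mul' k k ∘ₗ map σ counit))
  rw [dualAct_tensorCoaction _ _ (toConv σ) (toConv counit), ← Rsigma_eq_dualAct,
    show dualAct ρ (toConv counit) = LinearMap.id from hρ] at h
  rw [R12, h, ← LinearMap.comp_assoc, LinearEquiv.comp_symm, LinearMap.id_comp]
  rfl

lemma R13_Rsigma (hρ : IsCounital ρ) :
    R13 (Rsigma ρ σ) = dualAct (tensorCoaction ρ (tensorCoaction ρ ρ)) (sigma13 σ) := by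
  have h := dualAct_comp_eq_comp_dualAct (tensorCoaction_comp_lTensor_comm ρ ρ ρ) (sigma12 σ)
  rw [R13, R12_Rsigma σ hρ]
  change (TensorProduct.comm k M M).toLinearMap.lTensor M ∘ₗ _ ∘ₗ
    (TensorProduct.comm k M M).toLinearMap.lTensor M = _
  rw [h, ← LinearMap.comp_assoc, ← LinearMap.lTensor_comp, TensorProduct.comm_comp_comm,
    LinearMap.lTensor_id, LinearMap.id_comp]
  rfl

end Rsigma

theorem Rsigma_isLongSolution
    {k : Type*} [Field k] {C : Type*} [AddCommGroup C] [Module k C] [Coalgebra k C]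
    {M : Type*} [AddCommGroup M] [Module k M]
    (σ : C ⊗[k] C →ₗ[k] k) (hσ : IsStrongDMap σ)
    (ρ : M →ₗ[k] M ⊗[k] C) (hcoassoc : IsCoassoc ρ) (hcounit : IsCounital ρ) :
    IsLongSolution (Rsigma ρ σ) := by
  have hρ₃ := isCoassoc_tensorCoaction hcoassoc (isCoassoc_tensorCoaction hcoassoc hcoassoc)
  constructor
  · rw [R12_Rsigma σ hcounit, R13_Rsigma σ hcounit, dualAct_comp_dualAct hρ₃,
      dualAct_comp_dualAct hρ₃, hσ.commute_sigma12_sigma13.eq]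
  · rw [R12_Rsigma σ hcounit, R23_Rsigma σ hcounit, dualAct_comp_dualAct hρ₃,
      dualAct_comp_dualAct hρ₃, hσ.commute_sigma12_sigma23.eq]
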